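/- arXiv:0802.0946 — 7 statements merged into one kernel-verified Lean document; each statement's English description precedes it below -/
import Mathlib

section
/- Let Ω be an m-form of comass one on a Euclidean space V (i.e. |Ω(X₁,...,Xₘ)| ≤ 1 for every orthonormal system X₁,...,Xₘ). If X₁,...,Xₘ is an orthonormal system, U is a unit vector orthogonal to X₁, and we set cosθ = Ω(X₁,...,Xₘ), then |Ω(U,X₂,...,Xₘ)| ≤ sinθ, i.e. Ω(U,X₂,...,Xₘ)² ≤ 1 − Ω(X₁,...,Xₘ)². -/
/-!
Replacing `X₁` by `c X₁ + s U` with `c² + s² = 1` keeps the system orthonormal, and by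
multilinearity `Ω` takes the value `c Ω(X) + s Ω(U, X₂, …)` on it. The comass bound makes this
at most `1` for every such rotation; taking `(c, s)` parallel to `(Ω(X), Ω(U, X₂, …))` gives
`Ω(X)² + Ω(U, X₂, …)² ≤ 1`.
-/

open scoped RealInnerProductSpace

open Function

theorem sq_add_sq_le_one_of_forall_unit {a b : ℝ}
    (h : ∀ c s : ℝ, c ^ 2 + s ^ 2 = 1 → |c * a + s * b| ≤ 1) : a ^ 2 + b ^ 2 ≤ 1 := by
  rcases eq_or_lt_of_le (by positivity : 0 ≤ a ^ 2 + b ^ 2) with h0 | hpos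
  · linarith
  set r := √(a ^ 2 + b ^ 2)
  have hr : 0 < r := Real.sqrt_pos.2 hpos
  have hr2 : r ^ 2 = a ^ 2 + b ^ 2 := Real.sq_sqrt hpos.le
  have hunit : (a / r) ^ 2 + (b / r) ^ 2 = 1 := by
    field_simp
    linarith
  have hval : a / r * a + b / r * b = r := by
    field_simp
    linarith
  have hr1 : r ≤ 1 := by simpa [hval, abs_of_pos hr] using h _ _ hunit
  nlinarith

section

variable {𝕜 E ι : Type*} [RCLike 𝕜] [NormedAddCommGroup E] [InnerProductSpace 𝕜 E]
  [DecidableEq ι] {X : ι → E} {i : ι} {w : E}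

theorem Orthonormal.orthonormal_update_iff (hX : Orthonormal 𝕜 X) :
    Orthonormal 𝕜 (update X i w) ↔ ‖w‖ = 1 ∧ ∀ j ≠ i, inner 𝕜 w (X j) = 0 := by
  refine ⟨fun h ↦ ⟨by simpa using h.1 i, fun j hj ↦ ?_⟩, fun ⟨hw, hwX⟩ ↦ ⟨fun k ↦ ?_, fun k l hkl ↦ ?_⟩⟩
  · simpa [update_of_ne hj] using h.2 hj.symm
  · rcases eq_or_ne k i with rfl | hk
    · simpa using hw
    · simpa [update_of_ne hk] using hX.1 k
  · rcases eq_or_ne k i with rfl | hk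
    · simpa [update_of_ne hkl.symm] using hwX l hkl.symm
    rcases eq_or_ne l i with rfl | hl
    · simpa [update_of_ne hk] using inner_eq_zero_symm.1 (hwX k hk)
    · simpa [update_of_ne hk, update_of_ne hl] using hX.2 hkl

end

section

variable {V ι : Type*} [NormedAddCommGroup V] [InnerProductSpace ℝ V] [DecidableEq ι]
  {X : ι → V} {i : ι} {U : V}

theorem Orthonormal.update_rotate (hX : Orthonormal ℝ X) (hU : Orthonormal ℝ (update X i U))
    (hUX : ⟪U, X i⟫ = 0) {c s : ℝ} (hcs : c ^ 2 + s ^ 2 = 1) :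
    Orthonormal ℝ (update X i (c • X i + s • U)) := by
  obtain ⟨hUnorm, hUperp⟩ := hX.orthonormal_update_iff.1 hU
  refine hX.orthonormal_update_iff.2 ⟨?_, fun j hj ↦ ?_⟩
  · have hnorm_sq : ‖c • X i + s • U‖ ^ 2 = 1 := by
      rw [norm_add_sq_real, norm_smul, norm_smul, real_inner_smul_left, real_inner_smul_right,
        real_inner_comm, hUX, hX.1 i, hUnorm, Real.norm_eq_abs, Real.norm_eq_abs]
      simpa using hcs
    exact (pow_eq_one_iff_of_nonneg (norm_nonneg _) two_ne_zero).1 hnorm_sq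
  · rw [inner_add_left, real_inner_smul_left, real_inner_smul_left, hX.2 hj.symm, hUperp j hj]
    ring

end

theorem AlternatingMap.map_update_rotate {R M N ι : Type*} [CommSemiring R] [AddCommMonoid M]
    [Module R M] [AddCommMonoid N] [Module R N] [DecidableEq ι] (Ω : M [⋀^ι]→ₗ[R] N)
    (X : ι → M) (i : ι) (U : M) (c s : R) :
    Ω (update X i (c • X i + s • U)) = c • Ω X + s • Ω (update X i U) := by
  rw [Ω.map_update_add, Ω.map_update_smul, Ω.map_update_smul, update_eq_self]

/-- Lemma 2.1: for a comass-one `m`-form `Ω`, an orthonormal system `X₁,...,Xₘ`,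
and a unit vector `U` orthogonal to `X₁` such that `U, X₂, ..., Xₘ` is
orthonormal, one has `Ω(U,X₂,...,Xₘ)² ≤ 1 - Ω(X₁,...,Xₘ)²`. -/
theorem stmt_0 {V : Type*} [NormedAddCommGroup V] [InnerProductSpace ℝ V]
    {m : ℕ} (hm : 0 < m) (Ω : AlternatingMap ℝ V ℝ (Fin m))
    (hcomass : ∀ Y : Fin m → V, Orthonormal ℝ Y → |Ω Y| ≤ 1)
    (X : Fin m → V) (hX : Orthonormal ℝ X) (U : V)
    (hU : Orthonormal ℝ (Function.update X ⟨0, hm⟩ U))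
    (hUX : ⟪U, X ⟨0, hm⟩⟫ = 0) :
    (Ω (Function.update X ⟨0, hm⟩ U)) ^ 2 ≤ 1 - (Ω X) ^ 2 := by
  suffices h : (Ω X) ^ 2 + (Ω (update X ⟨0, hm⟩ U)) ^ 2 ≤ 1 by linarith
  refine sq_add_sq_le_one_of_forall_unit fun c s hcs ↦ ?_
  simpa only [Ω.map_update_rotate, smul_eq_mul] using hcomass _ (hX.update_rotate hU hUX hcs)
end

section
/- With notation as in the comass-one setting: for any t ∈ ℝ, the vector (X₁ + tU)/√(1+t²) together with X₂,...,Xₘ forms an orthonormal system, and Ω((X₁+tU)/√(1+t²), X₂,...,Xₘ) = (cosθ + t·a)/√(1+t²), where a = Ω(U,X₂,...,Xₘ). Consequently √(cos²θ + a²) ≤ 1. -/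
/-!
Replacing `X₁` by `s X₁ + t U` with `s² + t² = 1` rotates the frame in the plane of `X₁` and `U`,
so it stays orthonormal, and by multilinearity `Ω` takes the value `s cosθ + t a` on it. The
parametrisation `(s, t) = (1, t)/√(1+t²)` gives the formula, and the comass bound at
`(s, t) = (cosθ, a)/√(cos²θ + a²)` gives `√(cos²θ + a²) ≤ 1`.
-/

open Function
open scoped RealInnerProductSpace

theorem Orthonormal.update_of_inner_eq_zero {𝕜 E ι : Type*} [RCLike 𝕜] [NormedAddCommGroup E]
    [InnerProductSpace 𝕜 E] [DecidableEq ι] {v : ι → E} (hv : Orthonormal 𝕜 v) {i : ι} {w : E}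
    (hw : ‖w‖ = 1) (h : ∀ j, j ≠ i → inner 𝕜 w (v j) = 0) : Orthonormal 𝕜 (update v i w) := by
  refine ⟨fun j => ?_, fun j k hjk => ?_⟩
  · rcases eq_or_ne j i with rfl | hj
    · rwa [update_self]
    · rw [update_of_ne hj]; exact hv.1 j
  · rcases eq_or_ne j i with hji | hj <;> rcases eq_or_ne k i with hki | hk <;> subst_vars
    · exact absurd rfl hjk
    · rw [update_self, update_of_ne hk]; exact h k hk
    · rw [update_self, update_of_ne hj]; exact inner_eq_zero_symm.mp (h j hj)
    · rw [update_of_ne hj, update_of_ne hk]; exact hv.2 hjk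

theorem MultilinearMap.map_update_smul_add_smul {R ι M N : Type*} [CommSemiring R]
    [AddCommMonoid M] [AddCommMonoid N] [Module R M] [Module R N] [DecidableEq ι]
    (f : MultilinearMap R (fun _ : ι => M) N) (v : ι → M) (i : ι) (s t : R) (w : M) :
    f (update v i (s • v i + t • w)) = s • f v + t • f (update v i w) := by
  rw [f.map_update_add, f.map_update_smul, f.map_update_smul, update_eq_self]

theorem norm_smul_add_smul_eq_one {E : Type*} [NormedAddCommGroup E]
    [InnerProductSpace ℝ E] {x u : E} (hx : ‖x‖ = 1) (hu : ‖u‖ = 1) (hxu : ⟪x, u⟫ = 0)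
    {s t : ℝ} (hst : s ^ 2 + t ^ 2 = 1) : ‖s • x + t • u‖ = 1 := by
  have hperp : ⟪s • x, t • u⟫ = 0 := by
    rw [real_inner_smul_left, real_inner_smul_right, hxu, mul_zero, mul_zero]
  have hsq := norm_add_sq_eq_norm_sq_add_norm_sq_real hperp
  rw [norm_smul, norm_smul, hx, hu, Real.norm_eq_abs, Real.norm_eq_abs] at hsq
  have : ‖s • x + t • u‖ ^ 2 = 1 ^ 2 := by nlinarith [sq_abs s, sq_abs t]
  exact (pow_left_inj₀ (norm_nonneg _) zero_le_one two_ne_zero).mp this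

theorem Orthonormal.update_smul_add_smul {E ι : Type*} [NormedAddCommGroup E]
    [InnerProductSpace ℝ E] [DecidableEq ι] {X : ι → E} (hX : Orthonormal ℝ X) {U : E}
    (hU : ‖U‖ = 1) (hUX : ∀ i, ⟪U, X i⟫ = 0) (p : ι) {s t : ℝ} (hst : s ^ 2 + t ^ 2 = 1) :
    Orthonormal ℝ (update X p (s • X p + t • U)) := by
  refine hX.update_of_inner_eq_zero ?_ fun j hj => ?_
  · exact norm_smul_add_smul_eq_one (hX.1 p) hU (real_inner_comm U _ ▸ hUX p) hst
  · rw [inner_add_left, real_inner_smul_left, real_inner_smul_left, hX.2 hj.symm, hUX j]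
    ring

theorem Real.sqrt_sq_add_sq_le_one_of_forall {c a : ℝ}
    (h : ∀ s t : ℝ, s ^ 2 + t ^ 2 = 1 → |s * c + t * a| ≤ 1) : √(c ^ 2 + a ^ 2) ≤ 1 := by
  have hr2 : √(c ^ 2 + a ^ 2) ^ 2 = c ^ 2 + a ^ 2 := Real.sq_sqrt (by positivity)
  generalize √(c ^ 2 + a ^ 2) = r at hr2 ⊢
  rcases le_or_gt r 0 with hr | hr
  · linarith
  have hunit : (c / r) ^ 2 + (a / r) ^ 2 = 1 := by
    rw [div_pow, div_pow, ← add_div, ← hr2, div_self (by positivity)]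
  have hval : c / r * c + a / r * a = r := by
    field_simp
    linarith
  simpa [hval, abs_of_pos hr] using h _ _ hunit

/-- In the comass-one setting: for every `t ∈ ℝ` the vector `(X₁ + tU)/√(1+t²)`
together with `X₂,...,Xₘ` is an orthonormal system, the form evaluates on it to
`(cosθ + t·a)/√(1+t²)` where `cosθ = Ω(X₁,...,Xₘ)` and `a = Ω(U,X₂,...,Xₘ)`;
consequently `√(cos²θ + a²) ≤ 1`. -/
theorem stmt_1 {V : Type*} [NormedAddCommGroup V] [InnerProductSpace ℝ V]
    {m : ℕ} (hm : 0 < m) (Ω : AlternatingMap ℝ V ℝ (Fin m))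
    (hcomass : ∀ Y : Fin m → V, Orthonormal ℝ Y → |Ω Y| ≤ 1)
    (X : Fin m → V) (hX : Orthonormal ℝ X) (U : V) (hU : ‖U‖ = 1)
    (hUX : ∀ i : Fin m, ⟪U, X i⟫ = 0) :
    (∀ t : ℝ,
      Orthonormal ℝ
        (Function.update X ⟨0, hm⟩ ((Real.sqrt (1 + t ^ 2))⁻¹ • (X ⟨0, hm⟩ + t • U))) ∧
      Ω (Function.update X ⟨0, hm⟩ ((Real.sqrt (1 + t ^ 2))⁻¹ • (X ⟨0, hm⟩ + t • U))) =
        (Ω X + t * Ω (Function.update X ⟨0, hm⟩ U)) / Real.sqrt (1 + t ^ 2)) ∧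
    Real.sqrt ((Ω X) ^ 2 + (Ω (Function.update X ⟨0, hm⟩ U)) ^ 2) ≤ 1 := by
  set p : Fin m := ⟨0, hm⟩
  have rotate (s t : ℝ) (hst : s ^ 2 + t ^ 2 = 1) :
      Orthonormal ℝ (update X p (s • X p + t • U)) ∧
        Ω (update X p (s • X p + t • U)) = s * Ω X + t * Ω (update X p U) :=
    ⟨hX.update_smul_add_smul hU hUX p hst, Ω.toMultilinearMap.map_update_smul_add_smul X p s t U⟩
  refine ⟨fun t => ?_, Real.sqrt_sq_add_sq_le_one_of_forall fun s t hst => ?_⟩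
  · obtain ⟨horth, hval⟩ := rotate (√(1 + t ^ 2))⁻¹ ((√(1 + t ^ 2))⁻¹ * t) (by
      field_simp
      rw [Real.sq_sqrt (by positivity)])
    rw [smul_add, smul_smul]
    refine ⟨horth, ?_⟩
    rw [hval]
    field_simp
  · obtain ⟨horth, hval⟩ := rotate s t hst
    rw [← hval]
    exact hcomass _ horth
end

section
/- Let m ≥ 2, n ≥ 2, and let λ₁,...,λₘ be real numbers with |λᵢλⱼ| ≤ 1−δ for all i ≠ j, where 0 < δ ≤ 1. For real numbers h^{m+j}_{ik} (symmetric in the lower indices i,k, with 1 ≤ i,j,k ≤ m extended by λ_j = 0 for j > min(m,n)), define Q = ‖B‖² + ∑_{i,k} λᵢ²(h^{m+i}_{ik})² + 2∑_{k}∑_{i<j} λᵢλⱼ h^{m+i}_{jk} h^{m+j}_{ik}, where ‖B‖² ≥ ∑_{i,j,k}(h^{m+j}_{ik})². Then Q ≥ δ‖B‖². -/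
private lemma aux_pair {m : ℕ} (a : Fin m → Fin m → ℝ) (ha : ∀ p q, 0 ≤ a p q) :
    ∑ i : Fin m, ∑ j : Fin m, (if i < j then a i j + a j i else 0) ≤
      ∑ i : Fin m, ∑ j : Fin m, a i j := by
  have split : ∀ i j : Fin m, (if i < j then a i j + a j i else 0) =
      (if i < j then a i j else 0) + (if i < j then a j i else 0) := by
    intro i j; by_cases hij : i < j <;> simp [hij]
  calc ∑ i : Fin m, ∑ j : Fin m, (if i < j then a i j + a j i else 0)
      = (∑ i : Fin m, ∑ j : Fin m, (if i < j then a i j else 0)) +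
        (∑ i : Fin m, ∑ j : Fin m, (if i < j then a j i else 0)) := by
        simp only [split, Finset.sum_add_distrib]
    _ = (∑ i : Fin m, ∑ j : Fin m, (if i < j then a i j else 0)) +
        (∑ i : Fin m, ∑ j : Fin m, (if j < i then a i j else 0)) := by
        congr 1; exact Finset.sum_comm
    _ = ∑ i : Fin m, ∑ j : Fin m, ((if i < j then a i j else 0) + (if j < i then a i j else 0)) := by
        simp only [Finset.sum_add_distrib]
    _ ≤ ∑ i : Fin m, ∑ j : Fin m, a i j := by
        refine Finset.sum_le_sum (fun i _ => Finset.sum_le_sum (fun j _ => ?_))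
        rcases lt_trichotomy i j with hij | hij | hij
        · simp [hij, not_lt_of_gt hij]
        · simp [hij, lt_irrefl]; exact ha j j
        · simp [hij, not_lt_of_gt hij]


/-- δ-positivity of the quadratic form `Q_Ω` for the volume calibration on graphs:
if `|λᵢλⱼ| ≤ 1−δ` for `i ≠ j` (with `0 < δ ≤ 1`, and `λⱼ = 0` for `j > n`),
the coefficients `h^{m+j}_{ik}` are symmetric in `i,k`, and
`‖B‖² ≥ ∑_{ijk}(h^{m+j}_{ik})²`, then
`Q = ‖B‖² + ∑_{ik}λᵢ²(h^{m+i}_{ik})² + 2∑_k∑_{i<j}λᵢλⱼ h^{m+i}_{jk} h^{m+j}_{ik}`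
satisfies `Q ≥ δ‖B‖²`.  Here `h j i k` stands for `h^{m+j}_{ik}`. -/
theorem stmt_3 {m n : ℕ} (hm : 2 ≤ m) (hn : 2 ≤ n) (δ : ℝ) (hδ0 : 0 < δ) (hδ1 : δ ≤ 1)
    (lam : Fin m → ℝ) (hlam : ∀ i j : Fin m, i ≠ j → |lam i * lam j| ≤ 1 - δ)
    (hlam0 : ∀ j : Fin m, n ≤ (j : ℕ) → lam j = 0)
    (h : Fin m → Fin m → Fin m → ℝ) (hsymm : ∀ j i k, h j i k = h j k i)
    (Bsq : ℝ) (hB : ∑ j, ∑ i, ∑ k, (h j i k) ^ 2 ≤ Bsq) :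
    δ * Bsq ≤
      Bsq + (∑ i, ∑ k, lam i ^ 2 * (h i i k) ^ 2) +
        2 * ∑ k, ∑ i, ∑ j, (if i < j then lam i * lam j * h i j k * h j i k else 0) := by
  have hδ' : (0:ℝ) ≤ 1 - δ := by linarith
  have hD : (0:ℝ) ≤ ∑ i, ∑ k, lam i ^ 2 * (h i i k) ^ 2 := by positivity
  have reindex : ∑ j, ∑ i, ∑ k, (h j i k) ^ 2 = ∑ k, ∑ i, ∑ j, (h i j k) ^ 2 :=
    calc ∑ j, ∑ i, ∑ k, (h j i k) ^ 2
        = ∑ j, ∑ k, ∑ i, (h j i k) ^ 2 := Finset.sum_congr rfl (fun j _ => Finset.sum_comm)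
      _ = ∑ k, ∑ j, ∑ i, (h j i k) ^ 2 := Finset.sum_comm
      _ = ∑ k, ∑ i, ∑ j, (h i j k) ^ 2 := rfl
  have key : -((1-δ) * ∑ j, ∑ i, ∑ k, (h j i k) ^ 2) ≤
      2 * ∑ k, ∑ i, ∑ j, (if i < j then lam i * lam j * h i j k * h j i k else 0) := by
    have hsum : ∑ k, ∑ i, ∑ j, -(if i < j then (1-δ) * ((h i j k)^2 + (h j i k)^2) else 0) ≤
        ∑ k, ∑ i, ∑ j, 2 * (if i < j then lam i * lam j * h i j k * h j i k else 0) := by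
      refine Finset.sum_le_sum (fun k _ => Finset.sum_le_sum (fun i _ =>
        Finset.sum_le_sum (fun j _ => ?_)))
      by_cases hij : i < j
      · simp only [hij, if_true]
        have h2 := abs_le.mp (hlam i j (ne_of_lt hij))
        nlinarith [mul_nonneg (by linarith [h2.2] : (0:ℝ) ≤ 1 - δ - lam i * lam j)
            (sq_nonneg (h i j k - h j i k)),
          mul_nonneg (by linarith [h2.1] : (0:ℝ) ≤ 1 - δ + lam i * lam j)
            (sq_nonneg (h i j k + h j i k))]
      · simp [hij]
    have hT0 : ∑ k, ∑ i, ∑ j, (if i < j then ((h i j k)^2 + (h j i k)^2) else 0) ≤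
        ∑ j, ∑ i, ∑ k, (h j i k) ^ 2 := by
      rw [reindex]
      refine Finset.sum_le_sum (fun k _ => ?_)
      exact aux_pair (fun p q => (h p q k)^2) (fun p q => sq_nonneg _)
    have hfac : ∑ k, ∑ i, ∑ j, (if i < j then (1-δ) * ((h i j k)^2 + (h j i k)^2) else 0) =
        (1-δ) * ∑ k, ∑ i, ∑ j, (if i < j then ((h i j k)^2 + (h j i k)^2) else 0) := by
      simp only [Finset.mul_sum, mul_ite, mul_zero]
    have hTS : ∑ k, ∑ i, ∑ j, (if i < j then (1-δ) * ((h i j k)^2 + (h j i k)^2) else 0) ≤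
        (1-δ) * ∑ j, ∑ i, ∑ k, (h j i k) ^ 2 := by
      rw [hfac]
      exact mul_le_mul_of_nonneg_left hT0 hδ'
    have hneg : ∑ k, ∑ i, ∑ j, -(if i < j then (1-δ) * ((h i j k)^2 + (h j i k)^2) else 0) =
        -∑ k, ∑ i, ∑ j, (if i < j then (1-δ) * ((h i j k)^2 + (h j i k)^2) else 0) := by
      simp [Finset.sum_neg_distrib]
    have htwo : ∑ k, ∑ i, ∑ j, 2 * (if i < j then lam i * lam j * h i j k * h j i k else 0) =
        2 * ∑ k, ∑ i, ∑ j, (if i < j then lam i * lam j * h i j k * h j i k else 0) := by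
      simp [Finset.mul_sum]
    rw [hneg, htwo] at hsum
    linarith
  nlinarith [mul_le_mul_of_nonneg_left hB hδ']
end

section
/- Let T be an oriented 4-dimensional Euclidean space with a compatible hypercomplex structure J₁,J₂,J₃ (orthogonal anticommuting complex structures with J₃ = J₁J₂). For a linear map l : T → T define Ql = −(1/3)∑_{r=1}^{3} Jᵣ ∘ l ∘ Jᵣ and Hl = (1/4)(l + 3Ql). Then ⟨Hl, l⟩ = ‖Hl‖² ≥ 0, and consequently −(1/3)‖l‖² ≤ ⟨Ql, l⟩ ≤ ‖l‖². Moreover ⟨Ql,l⟩ = ‖l‖² iff l commutes with each Jᵣ (l is hypercomplex), and ⟨Ql,l⟩ = −(1/3)‖l‖² iff Hl = 0. -/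
open Matrix

private def ip (A B : Matrix (Fin 4) (Fin 4) ℝ) : ℝ := (Aᵀ * B).trace

private lemma ip_symm (A B : Matrix (Fin 4) (Fin 4) ℝ) : ip A B = ip B A := by
  unfold ip
  rw [← Matrix.trace_transpose (Aᵀ * B), Matrix.transpose_mul, Matrix.transpose_transpose]

private lemma ip_self_nonneg (A : Matrix (Fin 4) (Fin 4) ℝ) : 0 ≤ ip A A := by
  unfold ip
  simp only [Matrix.trace, Matrix.diag_apply, Matrix.mul_apply, Matrix.transpose_apply]
  exact Finset.sum_nonneg fun i _ => Finset.sum_nonneg fun j _ => mul_self_nonneg _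

private lemma ip_self_eq_zero (A : Matrix (Fin 4) (Fin 4) ℝ) : ip A A = 0 ↔ A = 0 := by
  unfold ip
  simp only [Matrix.trace, Matrix.diag_apply, Matrix.mul_apply, Matrix.transpose_apply]
  constructor
  · intro h
    ext i j
    have h1 := (Finset.sum_eq_zero_iff_of_nonneg (fun x _ => Finset.sum_nonneg
      (fun y _ => mul_self_nonneg (A y x)))).1 h j (Finset.mem_univ j)
    have h2 := (Finset.sum_eq_zero_iff_of_nonneg
      (fun y _ => mul_self_nonneg (A y j))).1 h1 i (Finset.mem_univ i)
    simpa [mul_self_eq_zero] using h2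
  · intro h; simp [h]

private lemma ip_mul_left (X A B : Matrix (Fin 4) (Fin 4) ℝ) :
    ip (X * A) B = ip A (Xᵀ * B) := by
  unfold ip; rw [Matrix.transpose_mul, Matrix.mul_assoc]

private lemma ip_mul_right (Y A B : Matrix (Fin 4) (Fin 4) ℝ) :
    ip (A * Y) B = ip A (B * Yᵀ) := by
  unfold ip
  rw [Matrix.transpose_mul, Matrix.mul_assoc, Matrix.trace_mul_comm, ← Matrix.mul_assoc, Matrix.mul_assoc]

private lemma ip_add_left (A B C : Matrix (Fin 4) (Fin 4) ℝ) :
    ip (A + B) C = ip A C + ip B C := by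
  unfold ip; rw [Matrix.transpose_add, Matrix.add_mul, Matrix.trace_add]

private lemma ip_add_right (A B C : Matrix (Fin 4) (Fin 4) ℝ) :
    ip A (B + C) = ip A B + ip A C := by
  unfold ip; rw [Matrix.mul_add, Matrix.trace_add]

private lemma ip_smul_left (c : ℝ) (A B : Matrix (Fin 4) (Fin 4) ℝ) :
    ip (c • A) B = c * ip A B := by
  unfold ip; rw [Matrix.transpose_smul, Matrix.smul_mul, Matrix.trace_smul]; rfl

private lemma ip_smul_right (c : ℝ) (A B : Matrix (Fin 4) (Fin 4) ℝ) :
    ip A (c • B) = c * ip A B := by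
  unfold ip; rw [Matrix.mul_smul, Matrix.trace_smul]; rfl

private lemma ip_neg_right (A B : Matrix (Fin 4) (Fin 4) ℝ) : ip A (-B) = -ip A B := by
  unfold ip; rw [Matrix.mul_neg, Matrix.trace_neg]

private lemma ip_sub_left (A B C : Matrix (Fin 4) (Fin 4) ℝ) :
    ip (A - B) C = ip A C - ip B C := by
  unfold ip; rw [Matrix.transpose_sub, Matrix.sub_mul, Matrix.trace_sub]

private lemma ip_sub_right (A B C : Matrix (Fin 4) (Fin 4) ℝ) :
    ip A (B - C) = ip A B - ip A C := by
  unfold ip; rw [Matrix.mul_sub, Matrix.trace_sub]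

/-- For a hypercomplex structure `J₁,J₂,J₃` on `ℝ⁴` (orthogonal anticommuting
complex structures with `J₁J₂ = J₃`, etc.) and a linear map `l`, with
`Ql = −(1/3)∑ᵣ Jᵣ l Jᵣ` and `Hl = (1/4)(l + 3Ql)`, and the trace inner product
`⟨A,B⟩ = tr(AᵀB)`: `⟨Hl,l⟩ = ‖Hl‖² ≥ 0`, hence
`−(1/3)‖l‖² ≤ ⟨Ql,l⟩ ≤ ‖l‖²`; moreover `⟨Ql,l⟩ = ‖l‖²` iff `l` commutes with
each `Jᵣ`, and `⟨Ql,l⟩ = −(1/3)‖l‖²` iff `Hl = 0`. -/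
theorem stmt_5 (Jq : Fin 3 → Matrix (Fin 4) (Fin 4) ℝ)
    (hskew : ∀ r, (Jq r)ᵀ = -(Jq r)) (hsq : ∀ r, Jq r * Jq r = -1)
    (h12 : Jq 0 * Jq 1 = Jq 2) (h23 : Jq 1 * Jq 2 = Jq 0) (h31 : Jq 2 * Jq 0 = Jq 1)
    (l Ql Hl : Matrix (Fin 4) (Fin 4) ℝ)
    (hQ : Ql = (-(1 / 3) : ℝ) • ∑ r, Jq r * l * Jq r)
    (hH : Hl = ((1 / 4) : ℝ) • (l + (3 : ℝ) • Ql)) :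
    (Hlᵀ * l).trace = (Hlᵀ * Hl).trace ∧ 0 ≤ (Hlᵀ * Hl).trace ∧
    (-(1 / 3)) * (lᵀ * l).trace ≤ (Qlᵀ * l).trace ∧
    (Qlᵀ * l).trace ≤ (lᵀ * l).trace ∧
    ((Qlᵀ * l).trace = (lᵀ * l).trace ↔ ∀ r, l * Jq r = Jq r * l) ∧
    ((Qlᵀ * l).trace = (-(1 / 3)) * (lᵀ * l).trace ↔ Hl = 0) := by
  -- derived product relations
  have h21 : Jq 1 * Jq 0 = -Jq 2 := by
    rw [← h23, ← mul_assoc, hsq]; simp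
  have h32 : Jq 2 * Jq 1 = -Jq 0 := by
    rw [← h31, ← mul_assoc, hsq]; simp
  have h13 : Jq 0 * Jq 2 = -Jq 1 := by
    rw [← h12, ← mul_assoc, hsq]; simp
  -- right-associated rewrite rules
  have q00 : ∀ x : Matrix (Fin 4) (Fin 4) ℝ, Jq 0 * (Jq 0 * x) = -x := by
    intro x; rw [← mul_assoc, hsq, neg_one_mul]
  have q11 : ∀ x : Matrix (Fin 4) (Fin 4) ℝ, Jq 1 * (Jq 1 * x) = -x := by
    intro x; rw [← mul_assoc, hsq, neg_one_mul]
  have q22 : ∀ x : Matrix (Fin 4) (Fin 4) ℝ, Jq 2 * (Jq 2 * x) = -x := by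
    intro x; rw [← mul_assoc, hsq, neg_one_mul]
  have q01 : ∀ x : Matrix (Fin 4) (Fin 4) ℝ, Jq 0 * (Jq 1 * x) = Jq 2 * x := by
    intro x; rw [← mul_assoc, h12]
  have q12 : ∀ x : Matrix (Fin 4) (Fin 4) ℝ, Jq 1 * (Jq 2 * x) = Jq 0 * x := by
    intro x; rw [← mul_assoc, h23]
  have q20 : ∀ x : Matrix (Fin 4) (Fin 4) ℝ, Jq 2 * (Jq 0 * x) = Jq 1 * x := by
    intro x; rw [← mul_assoc, h31]
  have q10 : ∀ x : Matrix (Fin 4) (Fin 4) ℝ, Jq 1 * (Jq 0 * x) = -(Jq 2 * x) := by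
    intro x; rw [← mul_assoc, h21, neg_mul]
  have q21 : ∀ x : Matrix (Fin 4) (Fin 4) ℝ, Jq 2 * (Jq 1 * x) = -(Jq 0 * x) := by
    intro x; rw [← mul_assoc, h32, neg_mul]
  have q02 : ∀ x : Matrix (Fin 4) (Fin 4) ℝ, Jq 0 * (Jq 2 * x) = -(Jq 1 * x) := by
    intro x; rw [← mul_assoc, h13, neg_mul]
  have hsum : (∑ r : Fin 3, Jq r * l * Jq r)
      = Jq 0 * l * Jq 0 + Jq 1 * l * Jq 1 + Jq 2 * l * Jq 2 := by
    rw [Fin.sum_univ_three]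
  set S : Matrix (Fin 4) (Fin 4) ℝ :=
    Jq 0 * l * Jq 0 + Jq 1 * l * Jq 1 + Jq 2 * l * Jq 2 with hSdef
  -- conjugation in the inner product
  have hconj : ∀ (r : Fin 3) (X : Matrix (Fin 4) (Fin 4) ℝ),
      ip (Jq r * l * Jq r) X = ip l (Jq r * (X * Jq r)) := by
    intro r X
    rw [ip_mul_right, ip_mul_left, hskew]
    simp [Matrix.neg_mul, Matrix.mul_neg]
  set n : ℝ := ip l l with hn
  set a0 : ℝ := ip l (Jq 0 * (l * Jq 0)) with ha0
  set a1 : ℝ := ip l (Jq 1 * (l * Jq 1)) with ha1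
  set a2 : ℝ := ip l (Jq 2 * (l * Jq 2)) with ha2
  have ha'0 : ip (Jq 0 * l * Jq 0) l = a0 := by rw [ip_symm, ha0, mul_assoc]
  have ha'1 : ip (Jq 1 * l * Jq 1) l = a1 := by rw [ip_symm, ha1, mul_assoc]
  have ha'2 : ip (Jq 2 * l * Jq 2) l = a2 := by rw [ip_symm, ha2, mul_assoc]
  -- the nine cross terms
  have hc00 : ip (Jq 0 * l * Jq 0) (Jq 0 * l * Jq 0) = n := by
    rw [hconj]; rw [hn]; congr 1
    simp only [mul_assoc, hsq, q00, q01, q02, q10, q11, q12, q20, q21, q22,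
      mul_neg, neg_mul, mul_neg_one, mul_one, neg_neg, h12, h23, h31, h21, h32, h13]
  have hc11 : ip (Jq 1 * l * Jq 1) (Jq 1 * l * Jq 1) = n := by
    rw [hconj]; rw [hn]; congr 1
    simp only [mul_assoc, hsq, q00, q01, q02, q10, q11, q12, q20, q21, q22,
      mul_neg, neg_mul, mul_neg_one, mul_one, neg_neg, h12, h23, h31, h21, h32, h13]
  have hc22 : ip (Jq 2 * l * Jq 2) (Jq 2 * l * Jq 2) = n := by
    rw [hconj]; rw [hn]; congr 1
    simp only [mul_assoc, hsq, q00, q01, q02, q10, q11, q12, q20, q21, q22,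
      mul_neg, neg_mul, mul_neg_one, mul_one, neg_neg, h12, h23, h31, h21, h32, h13]
  have hc01 : ip (Jq 0 * l * Jq 0) (Jq 1 * l * Jq 1) = -a2 := by
    rw [hconj]
    have : Jq 0 * ((Jq 1 * l * Jq 1) * Jq 0) = -(Jq 2 * (l * Jq 2)) := by
      simp only [mul_assoc, hsq, q00, q01, q02, q10, q11, q12, q20, q21, q22,
        mul_neg, neg_mul, mul_neg_one, mul_one, neg_neg, h12, h23, h31, h21, h32, h13]
    rw [this, ip_neg_right, ha2]
  have hc10 : ip (Jq 1 * l * Jq 1) (Jq 0 * l * Jq 0) = -a2 := by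
    rw [hconj]
    have : Jq 1 * ((Jq 0 * l * Jq 0) * Jq 1) = -(Jq 2 * (l * Jq 2)) := by
      simp only [mul_assoc, hsq, q00, q01, q02, q10, q11, q12, q20, q21, q22,
        mul_neg, neg_mul, mul_neg_one, mul_one, neg_neg, h12, h23, h31, h21, h32, h13]
    rw [this, ip_neg_right, ha2]
  have hc12 : ip (Jq 1 * l * Jq 1) (Jq 2 * l * Jq 2) = -a0 := by
    rw [hconj]
    have : Jq 1 * ((Jq 2 * l * Jq 2) * Jq 1) = -(Jq 0 * (l * Jq 0)) := by
      simp only [mul_assoc, hsq, q00, q01, q02, q10, q11, q12, q20, q21, q22,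
        mul_neg, neg_mul, mul_neg_one, mul_one, neg_neg, h12, h23, h31, h21, h32, h13]
    rw [this, ip_neg_right, ha0]
  have hc21 : ip (Jq 2 * l * Jq 2) (Jq 1 * l * Jq 1) = -a0 := by
    rw [hconj]
    have : Jq 2 * ((Jq 1 * l * Jq 1) * Jq 2) = -(Jq 0 * (l * Jq 0)) := by
      simp only [mul_assoc, hsq, q00, q01, q02, q10, q11, q12, q20, q21, q22,
        mul_neg, neg_mul, mul_neg_one, mul_one, neg_neg, h12, h23, h31, h21, h32, h13]
    rw [this, ip_neg_right, ha0]
  have hc02 : ip (Jq 0 * l * Jq 0) (Jq 2 * l * Jq 2) = -a1 := by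
    rw [hconj]
    have : Jq 0 * ((Jq 2 * l * Jq 2) * Jq 0) = -(Jq 1 * (l * Jq 1)) := by
      simp only [mul_assoc, hsq, q00, q01, q02, q10, q11, q12, q20, q21, q22,
        mul_neg, neg_mul, mul_neg_one, mul_one, neg_neg, h12, h23, h31, h21, h32, h13]
    rw [this, ip_neg_right, ha1]
  have hc20 : ip (Jq 2 * l * Jq 2) (Jq 0 * l * Jq 0) = -a1 := by
    rw [hconj]
    have : Jq 2 * ((Jq 0 * l * Jq 0) * Jq 2) = -(Jq 1 * (l * Jq 1)) := by
      simp only [mul_assoc, hsq, q00, q01, q02, q10, q11, q12, q20, q21, q22,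
        mul_neg, neg_mul, mul_neg_one, mul_one, neg_neg, h12, h23, h31, h21, h32, h13]
    rw [this, ip_neg_right, ha1]
  -- values of inner products with S
  have hipSl : ip S l = a0 + a1 + a2 := by
    rw [hSdef, ip_add_left, ip_add_left, ha'0, ha'1, ha'2]
  have hiplS : ip l S = a0 + a1 + a2 := by rw [ip_symm]; exact hipSl
  have hipSS : ip S S = 3 * n - 2 * (a0 + a1 + a2) := by
    rw [hSdef]
    rw [ip_add_left, ip_add_left, ip_add_right, ip_add_right, ip_add_right,
      ip_add_right, ip_add_right, ip_add_right,
      hc00, hc01, hc02, hc10, hc11, hc12, hc20, hc21, hc22]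
    ring
  -- Hl as a combination of l and S
  have hHl2 : Hl = (1/4 : ℝ) • l - (1/4 : ℝ) • S := by
    rw [hH, hQ, hsum]; module
  have hQl2 : Ql = (-(1/3) : ℝ) • S := by rw [hQ, hsum]
  -- key scalar values
  have hQl_l : ip Ql l = -(1/3) * (a0 + a1 + a2) := by
    rw [hQl2, ip_smul_left, hipSl]
  have hHl_l : ip Hl l = (1/4) * (n - (a0 + a1 + a2)) := by
    rw [hHl2, ip_sub_left, ip_smul_left, ip_smul_left, hipSl, ← hn]; ring
  have hHl_Hl : ip Hl Hl = (1/4) * (n - (a0 + a1 + a2)) := by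
    simp only [hHl2, ip_sub_left, ip_sub_right, ip_smul_left, ip_smul_right,
      hipSl, hiplS, hipSS, ← hn]
    ring
  have hD : ip (l - Hl) (l - Hl) = (1/4) * (3 * n + (a0 + a1 + a2)) := by
    have h1 : ip l Hl = ip Hl l := ip_symm _ _
    rw [ip_sub_left, ip_sub_right, ip_sub_right, h1, hHl_l, hHl_Hl, ← hn]
    ring
  have hHnn : (0:ℝ) ≤ ip Hl Hl := ip_self_nonneg _
  have hDnn : (0:ℝ) ≤ ip (l - Hl) (l - Hl) := ip_self_nonneg _
  have hAle : a0 + a1 + a2 ≤ n := by rw [hHl_Hl] at hHnn; linarith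
  have hAge : -(3 * n) ≤ a0 + a1 + a2 := by rw [hD] at hDnn; linarith
  -- translate trace goals
  have e1 : (Hlᵀ * l).trace = ip Hl l := rfl
  have e2 : (Hlᵀ * Hl).trace = ip Hl Hl := rfl
  have e3 : (Qlᵀ * l).trace = ip Ql l := rfl
  have e4 : (lᵀ * l).trace = n := rfl
  refine ⟨?_, ?_, ?_, ?_, ?_, ?_⟩
  · rw [e1, e2, hHl_l, hHl_Hl]
  · rw [e2]; exact hHnn
  · rw [e3, e4, hQl_l]; linarith
  · rw [e3, e4, hQl_l]; linarith
  · rw [e3, e4, hQl_l]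
    constructor
    · intro hEq
      have hA : a0 + a1 + a2 = -(3 * n) := by linarith
      have hD0 : ip (l - Hl) (l - Hl) = 0 := by rw [hD, hA]; ring
      have hlH : l - Hl = 0 := (ip_self_eq_zero _).1 hD0
      have hlHl : Hl = l := by
        have := sub_eq_zero.mp hlH; exact this.symm
      have hQll : Ql = l := by
        have h1 : ((1/4 : ℝ)) • (l + (3:ℝ) • Ql) = l := by rw [← hH, hlHl]
        linear_combination (norm := module) (4/3 : ℝ) • h1
      have hS3 : S = (-3 : ℝ) • l := by
        have h1 : l = (-(1/3) : ℝ) • S := by rw [← hQl2, hQll]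
        rw [h1]; module
      have key0 : Jq 0 * S - S * Jq 0 = Jq 0 * l - l * Jq 0 := by
        rw [hSdef]
        simp only [mul_add, add_mul, sub_eq_add_neg, neg_add, mul_assoc, hsq,
          q00, q01, q02, q10, q11, q12, q20, q21, q22,
          mul_neg, neg_mul, mul_neg_one, mul_one, neg_neg, h12, h23, h31, h21, h32, h13]
        abel
      have key1 : Jq 1 * S - S * Jq 1 = Jq 1 * l - l * Jq 1 := by
        rw [hSdef]
        simp only [mul_add, add_mul, sub_eq_add_neg, neg_add, mul_assoc, hsq,
          q00, q01, q02, q10, q11, q12, q20, q21, q22,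
          mul_neg, neg_mul, mul_neg_one, mul_one, neg_neg, h12, h23, h31, h21, h32, h13]
        abel
      have key2 : Jq 2 * S - S * Jq 2 = Jq 2 * l - l * Jq 2 := by
        rw [hSdef]
        simp only [mul_add, add_mul, sub_eq_add_neg, neg_add, mul_assoc, hsq,
          q00, q01, q02, q10, q11, q12, q20, q21, q22,
          mul_neg, neg_mul, mul_neg_one, mul_one, neg_neg, h12, h23, h31, h21, h32, h13]
        abel
      have comm : ∀ J : Matrix (Fin 4) (Fin 4) ℝ,
          J * S - S * J = J * l - l * J → l * J = J * l := by
        intro J hk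
        rw [hS3, Matrix.mul_smul, Matrix.smul_mul] at hk
        have h4 : (4 : ℝ) • (J * l - l * J) = 0 := by
          linear_combination (norm := module) -hk
        have h0 : J * l - l * J = 0 := by
          rcases smul_eq_zero.mp h4 with h | h
          · norm_num at h
          · exact h
        exact (sub_eq_zero.mp h0).symm
      intro r
      fin_cases r
      · exact comm _ key0
      · exact comm _ key1
      · exact comm _ key2
    · intro hc
      have hval : ∀ r : Fin 3, Jq r * (l * Jq r) = -l := by
        intro r; rw [hc r, ← mul_assoc, hsq, neg_one_mul]
      have hA : a0 + a1 + a2 = -(3 * n) := by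
        rw [ha0, ha1, ha2, hval 0, hval 1, hval 2, ip_neg_right, hn]; ring
      rw [hA]; ring
  · rw [e3, e4, hQl_l]
    constructor
    · intro hEq
      have hA : a0 + a1 + a2 = n := by
        have h3 : -(1/3) * (a0+a1+a2) = -(1/3) * n := hEq
        linarith
      have hH0 : ip Hl Hl = 0 := by rw [hHl_Hl, hA]; ring
      exact (ip_self_eq_zero _).1 hH0
    · intro hc
      have hHl0 : ip Hl l = 0 := by rw [hc]; unfold ip; simp
      rw [hHl_l] at hHl0
      have : a0 + a1 + a2 = n := by linarith
      rw [this]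
end

section
/- Let V be a quaternionic Hermitian vector space with orthogonal anticommuting complex structures I, J, K = IJ and Kähler forms w_I, w_J, w_K. The fundamental 4-form Ω = (1/6)(w_I∧w_I + w_J∧w_J + w_K∧w_K) satisfies: if X is a unit vector and x,y,z ∈ S² ⊂ ℝ³, then Ω(X, J_xX, J_yX, J_zX) = ⟨x, y×z⟩, where J_x = aI+bJ+cK for x = (a,b,c). -/
open scoped RealInnerProductSpace

/-- The evaluation of `w_A ∧ w_A` on four vectors, where `w_A(X,Y) = ⟪AX,Y⟫`. -/
noncomputable def wsq {V : Type*} [NormedAddCommGroup V] [InnerProductSpace ℝ V]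
    (A : V →ₗ[ℝ] V) (a b c d : V) : ℝ :=
  2 * (⟪A a, b⟫ * ⟪A c, d⟫ - ⟪A a, c⟫ * ⟪A b, d⟫ + ⟪A a, d⟫ * ⟪A b, c⟫)

/-- The fundamental 4-form `Ω = (1/6)(w_I∧w_I + w_J∧w_J + w_K∧w_K)`. -/
noncomputable def fundForm {V : Type*} [NormedAddCommGroup V] [InnerProductSpace ℝ V]
    (I J K : V →ₗ[ℝ] V) (a b c d : V) : ℝ :=
  (1 / 6) * (wsq I a b c d + wsq J a b c d + wsq K a b c d)

/-- `J_x = aI + bJ + cK` for `x = (a,b,c) ∈ ℝ³`. -/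
def Jvec {V : Type*} [AddCommGroup V] [Module ℝ V]
    (I J K : V →ₗ[ℝ] V) (x : Fin 3 → ℝ) : V →ₗ[ℝ] V :=
  x 0 • I + x 1 • J + x 2 • K

/-- The cross product on `ℝ³`. -/
def cross3 (y z : Fin 3 → ℝ) : Fin 3 → ℝ :=
  ![y 1 * z 2 - y 2 * z 1, y 2 * z 0 - y 0 * z 2, y 0 * z 1 - y 1 * z 0]

/-- On a quaternionic Hermitian vector space with structures `I, J, K = IJ`, the
fundamental 4-form satisfies `Ω(X, J_xX, J_yX, J_zX) = ⟨x, y×z⟩` for every unit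
vector `X` and all `x,y,z ∈ S²`. -/
theorem stmt_6 {V : Type*} [NormedAddCommGroup V] [InnerProductSpace ℝ V]
    (I J K : V →ₗ[ℝ] V)
    (hIiso : ∀ u v : V, ⟪I u, I v⟫ = ⟪u, v⟫)
    (hJiso : ∀ u v : V, ⟪J u, J v⟫ = ⟪u, v⟫)
    (hKiso : ∀ u v : V, ⟪K u, K v⟫ = ⟪u, v⟫)
    (hI2 : I ∘ₗ I = -LinearMap.id) (hJ2 : J ∘ₗ J = -LinearMap.id)
    (hIJ : I ∘ₗ J = -(J ∘ₗ I)) (hK : K = I ∘ₗ J)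
    (X : V) (hX : ‖X‖ = 1)
    (x y z : Fin 3 → ℝ)
    (hx : ∑ i, x i ^ 2 = 1) (hy : ∑ i, y i ^ 2 = 1) (hz : ∑ i, z i ^ 2 = 1) :
    fundForm I J K X (Jvec I J K x X) (Jvec I J K y X) (Jvec I J K z X) =
      ∑ i, x i * cross3 y z i := by
  have hII : ∀ v : V, I (I v) = -v := fun v => by
    have := congrArg (fun T : V →ₗ[ℝ] V => T v) hI2; simpa using this
  have hJJ : ∀ v : V, J (J v) = -v := fun v => by
    have := congrArg (fun T : V →ₗ[ℝ] V => T v) hJ2; simpa using this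
  have hIJ' : ∀ v : V, I (J v) = -J (I v) := fun v => by
    have := congrArg (fun T : V →ₗ[ℝ] V => T v) hIJ; simpa using this
  have hKv : ∀ v : V, K v = I (J v) := fun v => by rw [hK]; rfl
  have hIK : ∀ v : V, I (K v) = -J v := fun v => by
    rw [hKv, hII]
  have hKI : ∀ v : V, K (I v) = J v := fun v => by
    rw [hKv, hIJ', hII, map_neg, neg_neg]
  have hJK : ∀ v : V, J (K v) = I v := fun v => by
    rw [hKv, hIJ', map_neg, hJJ, neg_neg]
  have hKJ : ∀ v : V, K (J v) = -I v := fun v => by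
    rw [hKv, hJJ, map_neg]
  have hKK : ∀ v : V, K (K v) = -v := fun v => by
    simp [hKv, hIJ', hII, hJJ]
  have hIskew : ∀ u v : V, ⟪I u, v⟫ = -⟪u, I v⟫ := fun u v => by
    have h := hIiso u (I v); rw [hII] at h
    rw [inner_neg_right] at h; linarith
  have hJskew : ∀ u v : V, ⟪J u, v⟫ = -⟪u, J v⟫ := fun u v => by
    have h := hJiso u (J v); rw [hJJ] at h
    rw [inner_neg_right] at h; linarith
  have hKskew : ∀ u v : V, ⟪K u, v⟫ = -⟪u, K v⟫ := fun u v => by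
    have h := hKiso u (K v); rw [hKK] at h
    rw [inner_neg_right] at h; linarith
  have hXX : ⟪X, X⟫ = (1 : ℝ) := by
    rw [real_inner_self_eq_norm_sq, hX]; norm_num
  -- orthonormality of X, IX, JX, KX
  have skew_self : ∀ (A : V →ₗ[ℝ] V), (∀ u v : V, ⟪A u, v⟫ = -⟪u, A v⟫) →
      ⟪A X, X⟫ = 0 := fun A hA => by
    have h := hA X X
    have h2 : ⟪X, A X⟫ = ⟪A X, X⟫ := real_inner_comm _ _
    rw [h2] at h; linarith
  have oIX : ⟪I X, X⟫ = 0 := skew_self I hIskew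
  have oJX : ⟪J X, X⟫ = 0 := skew_self J hJskew
  have oKX : ⟪K X, X⟫ = 0 := skew_self K hKskew
  have oXI : ⟪X, I X⟫ = 0 := by rw [real_inner_comm]; exact oIX
  have oXJ : ⟪X, J X⟫ = 0 := by rw [real_inner_comm]; exact oJX
  have oXK : ⟪X, K X⟫ = 0 := by rw [real_inner_comm]; exact oKX
  have oIJ : ⟪I X, J X⟫ = 0 := by
    rw [hIskew, ← hKv, oXK]; ring
  have oJI : ⟪J X, I X⟫ = 0 := by rw [real_inner_comm]; exact oIJ
  have oIK : ⟪I X, K X⟫ = 0 := by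
    rw [hIskew, hIK, inner_neg_right, oXJ]; ring
  have oKI : ⟪K X, I X⟫ = 0 := by rw [real_inner_comm]; exact oIK
  have oJK : ⟪J X, K X⟫ = 0 := by
    rw [hJskew, hJK, oXI]; ring
  have oKJ : ⟪K X, J X⟫ = 0 := by rw [real_inner_comm]; exact oJK
  have nI : ⟪I X, I X⟫ = (1 : ℝ) := by rw [hIiso, hXX]
  have nJ : ⟪J X, J X⟫ = (1 : ℝ) := by rw [hJiso, hXX]
  have nK : ⟪K X, K X⟫ = (1 : ℝ) := by rw [hKiso, hXX]
  have hJI : ∀ v : V, J (I v) = -K v := fun v => by rw [hKv, hIJ', neg_neg]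
  simp only [fundForm, wsq, Jvec, LinearMap.add_apply, LinearMap.smul_apply,
    map_add, map_smul, map_neg,
    hII, hJJ, hKK, hIJ', hJI, hIK, hKI, hJK, hKJ,
    inner_add_left, inner_add_right, real_inner_smul_left, real_inner_smul_right,
    inner_neg_left, inner_neg_right,
    oIX, oJX, oKX, oXI, oXJ, oXK, oIJ, oJI, oIK, oKI, oJK, oKJ, nI, nJ, nK, hXX,
    cross3, Fin.sum_univ_three, Matrix.cons_val_zero, Matrix.cons_val_one,
    Matrix.head_cons, Matrix.cons_val_two, Matrix.tail_cons]
  ring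
end

section
/- With V a quaternionic Hermitian space as above, if X, Y are unit vectors with orthogonal quaternionic lines H_X ⊥ H_Y, then for any x, y ∈ S², Ω(X, J_xX, Y, J_yY) = (1/3)⟨x,y⟩, and Ω(X, J_xX, J_yX, Y) = 0. -/
open scoped RealInnerProductSpace

/-- If `X, Y` are unit vectors whose quaternionic lines `H_X, H_Y` are
orthogonal, then for any `x, y ∈ S²`: `Ω(X, J_xX, Y, J_yY) = (1/3)⟨x,y⟩` and
`Ω(X, J_xX, J_yX, Y) = 0`. -/
theorem stmt_7 {V : Type*} [NormedAddCommGroup V] [InnerProductSpace ℝ V]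
    (I J K : V →ₗ[ℝ] V)
    (hIiso : ∀ u v : V, ⟪I u, I v⟫ = ⟪u, v⟫)
    (hJiso : ∀ u v : V, ⟪J u, J v⟫ = ⟪u, v⟫)
    (hKiso : ∀ u v : V, ⟪K u, K v⟫ = ⟪u, v⟫)
    (hI2 : I ∘ₗ I = -LinearMap.id) (hJ2 : J ∘ₗ J = -LinearMap.id)
    (hIJ : I ∘ₗ J = -(J ∘ₗ I)) (hK : K = I ∘ₗ J)
    (X Y : V) (hX : ‖X‖ = 1) (hY : ‖Y‖ = 1)
    (horth : ∀ A B : V →ₗ[ℝ] V,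
      (A = LinearMap.id ∨ A = I ∨ A = J ∨ A = K) →
      (B = LinearMap.id ∨ B = I ∨ B = J ∨ B = K) → ⟪A X, B Y⟫ = 0)
    (x y : Fin 3 → ℝ) (hx : ∑ i, x i ^ 2 = 1) (hy : ∑ i, y i ^ 2 = 1) :
    fundForm I J K X (Jvec I J K x X) Y (Jvec I J K y Y) = (1 / 3) * ∑ i, x i * y i ∧
    fundForm I J K X (Jvec I J K x X) (Jvec I J K y X) Y = 0 := by

  -- pointwise composition facts
  have iIJ : ∀ v : V, I (J v) = K v := fun v => by rw [hK]; rfl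
  have iII : ∀ v : V, I (I v) = -v := fun v => by
    have := LinearMap.ext_iff.mp hI2 v; simpa using this
  have iJJ : ∀ v : V, J (J v) = -v := fun v => by
    have := LinearMap.ext_iff.mp hJ2 v; simpa using this
  have iJI : ∀ v : V, J (I v) = -K v := fun v => by
    have := LinearMap.ext_iff.mp hIJ v
    simp only [LinearMap.comp_apply, LinearMap.neg_apply] at this
    rw [← iIJ v, this, neg_neg]
  have iIK : ∀ v : V, I (K v) = -J v := fun v => by
    rw [← iIJ, iII]
  have iKJ : ∀ v : V, K (J v) = -I v := fun v => by
    rw [← iIJ, iJJ, map_neg]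
  have iKI : ∀ v : V, K (I v) = J v := fun v => by
    rw [← iIJ, iJI, map_neg, iIK, neg_neg]
  have iJK : ∀ v : V, J (K v) = I v := fun v => by
    rw [← iIJ, iJI, iKJ, neg_neg]
  have iKK : ∀ v : V, K (K v) = -v := fun v => by
    rw [← iIJ (K v), iJK, iII]
  -- skewness
  have sI : ∀ u v : V, ⟪I u, v⟫ = -⟪u, I v⟫ := fun u v => by
    have := hIiso u (I v); rw [iII, inner_neg_right] at this; linarith
  have sJ : ∀ u v : V, ⟪J u, v⟫ = -⟪u, J v⟫ := fun u v => by
    have := hJiso u (J v); rw [iJJ, inner_neg_right] at this; linarith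
  have sK : ∀ u v : V, ⟪K u, v⟫ = -⟪u, K v⟫ := fun u v => by
    have := hKiso u (K v); rw [iKK, inner_neg_right] at this; linarith
  -- generic inner product table on a quaternionic line
  have zI0 : ∀ v : V, ⟪I v, v⟫ = 0 := fun v => by
    have h1 := sI v v; have h2 := real_inner_comm (I v) v; linarith
  have zJ0 : ∀ v : V, ⟪J v, v⟫ = 0 := fun v => by
    have h1 := sJ v v; have h2 := real_inner_comm (J v) v; linarith
  have zK0 : ∀ v : V, ⟪K v, v⟫ = 0 := fun v => by
    have h1 := sK v v; have h2 := real_inner_comm (K v) v; linarith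
  have z0I : ∀ v : V, ⟪v, I v⟫ = 0 := fun v => by
    rw [real_inner_comm]; exact zI0 v
  have z0J : ∀ v : V, ⟪v, J v⟫ = 0 := fun v => by
    rw [real_inner_comm]; exact zJ0 v
  have z0K : ∀ v : V, ⟪v, K v⟫ = 0 := fun v => by
    rw [real_inner_comm]; exact zK0 v
  have zIJ : ∀ v : V, ⟪I v, J v⟫ = 0 := fun v => by
    rw [sI, iIJ, z0K, neg_zero]
  have zJI : ∀ v : V, ⟪J v, I v⟫ = 0 := fun v => by
    rw [sJ, iJI, inner_neg_right, z0K, neg_zero, neg_zero]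
  have zIK : ∀ v : V, ⟪I v, K v⟫ = 0 := fun v => by
    rw [sI, iIK, inner_neg_right, z0J, neg_zero, neg_zero]
  have zKI : ∀ v : V, ⟪K v, I v⟫ = 0 := fun v => by
    rw [sK, iKI, z0J, neg_zero]
  have zJK : ∀ v : V, ⟪J v, K v⟫ = 0 := fun v => by
    rw [sJ, iJK, z0I, neg_zero]
  have zKJ : ∀ v : V, ⟪K v, J v⟫ = 0 := fun v => by
    rw [sK, iKJ, inner_neg_right, z0I, neg_zero, neg_zero]
  have hXX : ⟪X, X⟫ = (1:ℝ) := by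
    rw [real_inner_self_eq_norm_mul_norm, hX]; norm_num
  have hYY : ⟪Y, Y⟫ = (1:ℝ) := by
    rw [real_inner_self_eq_norm_mul_norm, hY]; norm_num
  -- orthogonality of the two lines
  have oidid : ⟪X, Y⟫ = 0 := by
    simpa using horth LinearMap.id LinearMap.id (Or.inl rfl) (Or.inl rfl)
  have oidI : ⟪X, I Y⟫ = 0 := by
    simpa using horth LinearMap.id I (Or.inl rfl) (Or.inr (Or.inl rfl))
  have oidJ : ⟪X, J Y⟫ = 0 := by
    simpa using horth LinearMap.id J (Or.inl rfl) (Or.inr (Or.inr (Or.inl rfl)))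
  have oidK : ⟪X, K Y⟫ = 0 := by
    simpa using horth LinearMap.id K (Or.inl rfl) (Or.inr (Or.inr (Or.inr rfl)))
  have oIid : ⟪I X, Y⟫ = 0 := by
    simpa using horth I LinearMap.id (Or.inr (Or.inl rfl)) (Or.inl rfl)
  have oII : ⟪I X, I Y⟫ = 0 := by
    simpa using horth I I (Or.inr (Or.inl rfl)) (Or.inr (Or.inl rfl))
  have oIJ : ⟪I X, J Y⟫ = 0 := by
    simpa using horth I J (Or.inr (Or.inl rfl)) (Or.inr (Or.inr (Or.inl rfl)))
  have oIK : ⟪I X, K Y⟫ = 0 := by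
    simpa using horth I K (Or.inr (Or.inl rfl)) (Or.inr (Or.inr (Or.inr rfl)))
  have oJid : ⟪J X, Y⟫ = 0 := by
    simpa using horth J LinearMap.id (Or.inr (Or.inr (Or.inl rfl))) (Or.inl rfl)
  have oJI : ⟪J X, I Y⟫ = 0 := by
    simpa using horth J I (Or.inr (Or.inr (Or.inl rfl))) (Or.inr (Or.inl rfl))
  have oJJ : ⟪J X, J Y⟫ = 0 := by
    simpa using horth J J (Or.inr (Or.inr (Or.inl rfl))) (Or.inr (Or.inr (Or.inl rfl)))
  have oJK : ⟪J X, K Y⟫ = 0 := by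
    simpa using horth J K (Or.inr (Or.inr (Or.inl rfl))) (Or.inr (Or.inr (Or.inr rfl)))
  have oKid : ⟪K X, Y⟫ = 0 := by
    simpa using horth K LinearMap.id (Or.inr (Or.inr (Or.inr rfl))) (Or.inl rfl)
  have oKI : ⟪K X, I Y⟫ = 0 := by
    simpa using horth K I (Or.inr (Or.inr (Or.inr rfl))) (Or.inr (Or.inl rfl))
  have oKJ : ⟪K X, J Y⟫ = 0 := by
    simpa using horth K J (Or.inr (Or.inr (Or.inr rfl))) (Or.inr (Or.inr (Or.inl rfl)))
  have oKK : ⟪K X, K Y⟫ = 0 := by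
    simpa using horth K K (Or.inr (Or.inr (Or.inr rfl))) (Or.inr (Or.inr (Or.inr rfl)))

  constructor <;>
  · simp only [fundForm, wsq, Jvec, LinearMap.add_apply, LinearMap.smul_apply,
      map_add, map_smul, inner_add_left, inner_add_right,
      real_inner_smul_left, real_inner_smul_right, smul_eq_mul,
      iII, iJJ, iKK, iIJ, iJI, iIK, iKI, iJK, iKJ,
      inner_neg_left, inner_neg_right, map_neg,
      zI0, zJ0, zK0, z0I, z0J, z0K, zIJ, zJI, zIK, zKI, zJK, zKJ,
      hIiso, hJiso, hKiso, hXX, hYY,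
      oidid, oidI, oidJ, oidK, oIid, oII, oIJ, oIK,
      oJid, oJI, oJJ, oJK, oKid, oKI, oKJ, oKK,
      Fin.sum_univ_three]
    ring
end

section
/- (δ-positivity for almost complex 4-submanifolds of quaternionic 8-manifolds) Let B = (l₁,...,l₄) where each l_k : T → T is linear on an oriented 4-dimensional Euclidean space with hypercomplex structures J_r⁺ (selfdual) and J_r⁻ (antiselfdual), and let ‖B‖² = ∑_k‖l_k‖². Suppose ‖H⁺l_k‖ ≤ ε‖l_k‖ for all k, where 0 ≤ ε ≤ 1 and H⁺l = (1/4)(l + 3Q⁺l) with Q⁺l = −(1/3)∑_r J_r⁺ l J_r⁺. Let s² = (3/2)(1−cosθ) with 1−cosθ ≤ τ ≤ 4(1−ε)/9. Then cosθ·Q̃_Ω(B) := (D + s²E) − s²(A + (2/3)‖B‖²) ≥ δ‖B‖² with δ = (4(1−ε) − 9τ)/3 ≥ 0, where D = ∑_k(‖l_k‖² − ⟨Q⁺l_k,l_k⟩), A = ∑_k(⟨Q⁺l′_k,l′_k⟩ + (1/3)‖l_k‖²), E = ∑_k(⟨Q⁻l″_k,l″_k⟩ + (1/3)‖l_k‖²),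 and the bounds 0 ≤ D, A, E ≤ (4/3)‖B‖² hold. -/
open Matrix

/-- The operator `Q l = −(1/3)∑ᵣ Jᵣ l Jᵣ` associated with a hypercomplex
structure `Jfam`. -/
noncomputable def Qop (Jfam : Fin 3 → Matrix (Fin 4) (Fin 4) ℝ)
    (l : Matrix (Fin 4) (Fin 4) ℝ) : Matrix (Fin 4) (Fin 4) ℝ :=
  (-(1 / 3) : ℝ) • ∑ r, Jfam r * l * Jfam r

/-- `H l = (1/4)(l + 3Ql)`, the projection onto hypercomplex maps. -/
noncomputable def Hop (Jfam : Fin 3 → Matrix (Fin 4) (Fin 4) ℝ)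
    (l : Matrix (Fin 4) (Fin 4) ℝ) : Matrix (Fin 4) (Fin 4) ℝ :=
  ((1 / 4) : ℝ) • (l + (3 : ℝ) • Qop Jfam l)

/-- The trace inner product `⟨A,B⟩ = tr(AᵀB)` on `4×4` matrices. -/
noncomputable def mip (A B : Matrix (Fin 4) (Fin 4) ℝ) : ℝ := (Aᵀ * B).trace

lemma mip_eq_sum (A B : Matrix (Fin 4) (Fin 4) ℝ) :
    mip A B = ∑ i, ∑ j, A j i * B j i := by
  simp [mip, Matrix.trace, Matrix.mul_apply, Matrix.diag, Matrix.transpose_apply]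

lemma mip_comm (A B : Matrix (Fin 4) (Fin 4) ℝ) : mip A B = mip B A := by
  simp [mip_eq_sum, mul_comm]

lemma mip_add_left (A B C : Matrix (Fin 4) (Fin 4) ℝ) :
    mip (A + B) C = mip A C + mip B C := by
  simp [mip_eq_sum, add_mul, Finset.sum_add_distrib]

lemma mip_add_right (A B C : Matrix (Fin 4) (Fin 4) ℝ) :
    mip A (B + C) = mip A B + mip A C := by
  simp [mip_eq_sum, mul_add, Finset.sum_add_distrib]

lemma mip_smul_left (c : ℝ) (A B : Matrix (Fin 4) (Fin 4) ℝ) :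
    mip (c • A) B = c * mip A B := by
  simp [mip_eq_sum, Finset.mul_sum, mul_assoc]

lemma mip_smul_right (c : ℝ) (A B : Matrix (Fin 4) (Fin 4) ℝ) :
    mip A (c • B) = c * mip A B := by
  rw [mip_comm, mip_smul_left, mip_comm]

lemma mip_self_nonneg (A : Matrix (Fin 4) (Fin 4) ℝ) : 0 ≤ mip A A := by
  rw [mip_eq_sum]
  exact Finset.sum_nonneg fun i _ => Finset.sum_nonneg fun j _ => mul_self_nonneg _

lemma Qop_adj (J : Fin 3 → Matrix (Fin 4) (Fin 4) ℝ)
    (hskew : ∀ r, (J r)ᵀ = -(J r)) (a b : Matrix (Fin 4) (Fin 4) ℝ) :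
    mip (Qop J a) b = mip a (Qop J b) := by
  unfold Qop mip
  rw [transpose_smul, Matrix.smul_mul, Matrix.mul_smul, trace_smul, trace_smul]
  congr 1
  rw [Matrix.transpose_sum, Finset.sum_mul, Matrix.mul_sum, trace_sum, trace_sum]
  refine Finset.sum_congr rfl fun r _ => ?_
  have h1 : (J r * a * J r)ᵀ = J r * (aᵀ * J r) := by
    simp [Matrix.transpose_mul, hskew, Matrix.neg_mul, Matrix.mul_neg, mul_assoc]
  rw [h1, mul_assoc, Matrix.trace_mul_comm]
  simp [mul_assoc]

lemma Qop_sq (J : Fin 3 → Matrix (Fin 4) (Fin 4) ℝ)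
    (hsq : ∀ r, J r * J r = -1)
    (h12 : J 0 * J 1 = J 2) (h23 : J 1 * J 2 = J 0) (h31 : J 2 * J 0 = J 1)
    (m : Matrix (Fin 4) (Fin 4) ℝ) :
    Qop J (Qop J m) = (1 / 3 : ℝ) • m + (2 / 3 : ℝ) • Qop J m := by
  have h10 : J 1 * J 0 = -(J 2) := by
    rw [← h23, ← mul_assoc, hsq 1]; simp
  have h21 : J 2 * J 1 = -(J 0) := by
    rw [← h31, ← mul_assoc, hsq 2]; simp
  have h02 : J 0 * J 2 = -(J 1) := by
    rw [← h12, ← mul_assoc, hsq 0]; simp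
  have key : (∑ r, J r * (∑ s, J s * m * J s) * J r)
      = (3 : ℝ) • m - (2 : ℝ) • ∑ s, J s * m * J s := by
    have hgroup : ∀ (a b c : Matrix (Fin 4) (Fin 4) ℝ),
        a * (b * c * b) * a = (a * b) * c * (b * a) := by
      intros; noncomm_ring
    simp only [Fin.sum_univ_three, Matrix.mul_add, Matrix.add_mul, hgroup,
      hsq, h12, h23, h31, h10, h21, h02]
    simp only [Matrix.neg_mul, Matrix.mul_neg, Matrix.one_mul, Matrix.mul_one,
      neg_neg]
    module
  unfold Qop
  simp only [Matrix.mul_smul, Matrix.smul_mul, ← Finset.smul_sum]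
  rw [key]
  module

lemma Hop_norm (J : Fin 3 → Matrix (Fin 4) (Fin 4) ℝ)
    (hskew : ∀ r, (J r)ᵀ = -(J r)) (hsq : ∀ r, J r * J r = -1)
    (h12 : J 0 * J 1 = J 2) (h23 : J 1 * J 2 = J 0) (h31 : J 2 * J 0 = J 1)
    (m : Matrix (Fin 4) (Fin 4) ℝ) :
    mip (Hop J m) (Hop J m) = (1 / 4) * (mip m m + 3 * mip (Qop J m) m) := by
  have hadj := Qop_adj J hskew (Qop J m) m
  have hq : mip (Qop J m) (Qop J m) =
      (1 / 3) * mip m m + (2 / 3) * mip (Qop J m) m := by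
    rw [← hadj, Qop_sq J hsq h12 h23 h31, mip_add_left, mip_smul_left, mip_smul_left]
  unfold Hop
  simp only [mip_smul_left, mip_smul_right, mip_add_left, mip_add_right]
  rw [hq, mip_comm m (Qop J m)]
  ring

lemma mip_Q_bounds (J : Fin 3 → Matrix (Fin 4) (Fin 4) ℝ)
    (hskew : ∀ r, (J r)ᵀ = -(J r)) (hsq : ∀ r, J r * J r = -1)
    (h12 : J 0 * J 1 = J 2) (h23 : J 1 * J 2 = J 0) (h31 : J 2 * J 0 = J 1)
    (m : Matrix (Fin 4) (Fin 4) ℝ) :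
    -(1 / 3) * mip m m ≤ mip (Qop J m) m ∧ mip (Qop J m) m ≤ mip m m := by
  have hH := Hop_norm J hskew hsq h12 h23 h31 m
  have h1 := mip_self_nonneg (Hop J m)
  have h2 := mip_self_nonneg (m - Hop J m)
  have h3 : mip (m - Hop J m) (m - Hop J m) =
      mip m m - 2 * mip (Hop J m) m + mip (Hop J m) (Hop J m) := by
    have hmm : m - Hop J m = m + (-1 : ℝ) • Hop J m := by module
    rw [hmm]
    simp only [mip_add_left, mip_add_right, mip_smul_left, mip_smul_right]
    rw [mip_comm m (Hop J m)]
    ring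
  have h4 : mip (Hop J m) m = (1 / 4) * (mip m m + 3 * mip (Qop J m) m) := by
    unfold Hop
    rw [mip_smul_left, mip_add_left, mip_smul_left]
  constructor
  · nlinarith [hH, h1, h2, h3, h4]
  · nlinarith [hH, h1, h2, h3, h4]

lemma mip_mul_orth (S m : Matrix (Fin 4) (Fin 4) ℝ) (hS : S * Sᵀ = 1) :
    mip (m * S) (m * S) = mip m m := by
  unfold mip
  rw [Matrix.transpose_mul, mul_assoc, Matrix.trace_mul_comm,
    show (mᵀ * (m * S)) * Sᵀ = mᵀ * m * (S * Sᵀ) by noncomm_ring, hS, mul_one]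

/-- Lemma 5.5: δ-positivity of `Q̃_Ω(B)` on almost complex 4-submanifolds of
quaternionic-Kähler 8-manifolds.  `Jp` (self-dual) and `Jm` (anti-self-dual) are
hypercomplex structures of an oriented 4-dimensional Euclidean space, the second
fundamental form is `B = (l₁,...,l₄)` with `‖B‖² = ∑ₖ‖lₖ‖²`, and
`l′ₖ = lₖ∘S′`, `l″ₖ = lₖ∘S″` with `S′ = diag(1,1,−1,−1)`, `S″ = diag(1,−1,−1,1)`.
If `‖H⁺lₖ‖ ≤ ε‖lₖ‖` for all `k` (`0 ≤ ε ≤ 1`) and `1−cosθ ≤ τ ≤ 4(1−ε)/9`, then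
with `s² = (3/2)(1−cosθ)`, `δ = (4(1−ε)−9τ)/3 ≥ 0`, and
`D = ∑ₖ(‖lₖ‖² − ⟨Q⁺lₖ,lₖ⟩)`, `A = ∑ₖ(⟨Q⁺l′ₖ,l′ₖ⟩ + (1/3)‖lₖ‖²)`,
`E = ∑ₖ(⟨Q⁻l″ₖ,l″ₖ⟩ + (1/3)‖lₖ‖²)`, the bounds `0 ≤ D, A, E ≤ (4/3)‖B‖²` hold
and `cosθ·Q̃_Ω(B) = (D + s²E) − s²(A + (2/3)‖B‖²) ≥ δ‖B‖²`. -/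
theorem stmt_19 (Jp Jm : Fin 3 → Matrix (Fin 4) (Fin 4) ℝ)
    (hpskew : ∀ r, (Jp r)ᵀ = -(Jp r)) (hpsq : ∀ r, Jp r * Jp r = -1)
    (hp12 : Jp 0 * Jp 1 = Jp 2) (hp23 : Jp 1 * Jp 2 = Jp 0) (hp31 : Jp 2 * Jp 0 = Jp 1)
    (hmskew : ∀ r, (Jm r)ᵀ = -(Jm r)) (hmsq : ∀ r, Jm r * Jm r = -1)
    (hm12 : Jm 0 * Jm 1 = Jm 2) (hm23 : Jm 1 * Jm 2 = Jm 0) (hm31 : Jm 2 * Jm 0 = Jm 1)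
    (hpm : ∀ r t, Jp r * Jm t = Jm t * Jp r)
    (l : Fin 4 → Matrix (Fin 4) (Fin 4) ℝ)
    (S' S'' : Matrix (Fin 4) (Fin 4) ℝ)
    (hS' : S' = Matrix.diagonal ![1, 1, -1, -1])
    (hS'' : S'' = Matrix.diagonal ![1, -1, -1, 1])
    (ε τ cosθ : ℝ) (hε0 : 0 ≤ ε) (hε1 : ε ≤ 1)
    (hτ0 : 0 ≤ τ) (hτ1 : 1 - cosθ ≤ τ) (hτ2 : τ ≤ 4 * (1 - ε) / 9)
    (hcos : cosθ ≤ 1)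
    (hH : ∀ k, Real.sqrt (mip (Hop Jp (l k)) (Hop Jp (l k))) ≤
      ε * Real.sqrt (mip (l k) (l k)))
    (Bsq s2 δ Dv Av Ev : ℝ)
    (hBsq : Bsq = ∑ k, mip (l k) (l k))
    (hs2 : s2 = (3 / 2) * (1 - cosθ))
    (hδ : δ = (4 * (1 - ε) - 9 * τ) / 3)
    (hDv : Dv = ∑ k, (mip (l k) (l k) - mip (Qop Jp (l k)) (l k)))
    (hAv : Av = ∑ k, (mip (Qop Jp (l k * S')) (l k * S') + (1 / 3) * mip (l k) (l k)))
    (hEv : Ev = ∑ k, (mip (Qop Jm (l k * S'')) (l k * S'') + (1 / 3) * mip (l k) (l k))) :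
    0 ≤ δ ∧
    (0 ≤ Dv ∧ Dv ≤ (4 / 3) * Bsq) ∧
    (0 ≤ Av ∧ Av ≤ (4 / 3) * Bsq) ∧
    (0 ≤ Ev ∧ Ev ≤ (4 / 3) * Bsq) ∧
    δ * Bsq ≤ (Dv + s2 * Ev) - s2 * (Av + (2 / 3) * Bsq) := by
  have hS'o : S' * S'ᵀ = 1 := by
    subst hS'
    rw [Matrix.diagonal_transpose, Matrix.diagonal_mul_diagonal]
    ext i j
    fin_cases i <;> fin_cases j <;> simp [Matrix.diagonal, Matrix.one_apply]
  have hS''o : S'' * S''ᵀ = 1 := by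
    subst hS''
    rw [Matrix.diagonal_transpose, Matrix.diagonal_mul_diagonal]
    ext i j
    fin_cases i <;> fin_cases j <;> simp [Matrix.diagonal, Matrix.one_apply]
  have hnS' : ∀ k, mip (l k * S') (l k * S') = mip (l k) (l k) :=
    fun k => mip_mul_orth S' (l k) hS'o
  have hnS'' : ∀ k, mip (l k * S'') (l k * S'') = mip (l k) (l k) :=
    fun k => mip_mul_orth S'' (l k) hS''o
  have hB0 : 0 ≤ Bsq := by
    rw [hBsq]; exact Finset.sum_nonneg fun k _ => mip_self_nonneg _
  have hs20 : 0 ≤ s2 := by rw [hs2]; linarith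
  -- per-k bounds
  have hQp := fun k => mip_Q_bounds Jp hpskew hpsq hp12 hp23 hp31 (l k)
  have hQp' := fun k => mip_Q_bounds Jp hpskew hpsq hp12 hp23 hp31 (l k * S')
  have hQm'' := fun k => mip_Q_bounds Jm hmskew hmsq hm12 hm23 hm31 (l k * S'')
  have hDk : ∀ k, (4 / 3) * (1 - ε) * mip (l k) (l k) ≤
      mip (l k) (l k) - mip (Qop Jp (l k)) (l k) := by
    intro k
    have hn := mip_self_nonneg (l k)
    have hHn := Hop_norm Jp hpskew hpsq hp12 hp23 hp31 (l k)
    have hsq1 : mip (Hop Jp (l k)) (Hop Jp (l k)) ≤ ε ^ 2 * mip (l k) (l k) := by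
      have h := hH k
      have h0 := Real.sqrt_nonneg (mip (Hop Jp (l k)) (Hop Jp (l k)))
      have h1 := Real.sqrt_nonneg (mip (l k) (l k))
      have e1 := Real.sq_sqrt (mip_self_nonneg (Hop Jp (l k)))
      have e2 := Real.sq_sqrt (mip_self_nonneg (l k))
      nlinarith
    nlinarith [mul_nonneg (by nlinarith : (0:ℝ) ≤ ε - ε ^ 2) hn]
  have hDlow : (4 / 3) * (1 - ε) * Bsq ≤ Dv := by
    rw [hDv, hBsq, Finset.mul_sum]
    exact Finset.sum_le_sum fun k _ => hDk k
  have hD0 : 0 ≤ Dv := by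
    rw [hDv]
    exact Finset.sum_nonneg fun k _ => by linarith [(hQp k).2]
  have hDhi : Dv ≤ (4 / 3) * Bsq := by
    rw [hDv, hBsq, Finset.mul_sum]
    exact Finset.sum_le_sum fun k _ => by linarith [(hQp k).1]
  have hA0 : 0 ≤ Av := by
    rw [hAv]
    refine Finset.sum_nonneg fun k _ => ?_
    have := (hQp' k).1
    rw [hnS' k] at this
    linarith
  have hAhi : Av ≤ (4 / 3) * Bsq := by
    rw [hAv, hBsq, Finset.mul_sum]
    refine Finset.sum_le_sum fun k _ => ?_
    have := (hQp' k).2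
    rw [hnS' k] at this
    linarith
  have hE0 : 0 ≤ Ev := by
    rw [hEv]
    refine Finset.sum_nonneg fun k _ => ?_
    have := (hQm'' k).1
    rw [hnS'' k] at this
    linarith
  have hEhi : Ev ≤ (4 / 3) * Bsq := by
    rw [hEv, hBsq, Finset.mul_sum]
    refine Finset.sum_le_sum fun k _ => ?_
    have := (hQm'' k).2
    rw [hnS'' k] at this
    linarith
  have hδ0 : 0 ≤ δ := by rw [hδ]; linarith
  refine ⟨hδ0, ⟨hD0, hDhi⟩, ⟨hA0, hAhi⟩, ⟨hE0, hEhi⟩, ?_⟩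
  have hP1 : 0 ≤ s2 * Ev := mul_nonneg hs20 hE0
  have hP2 : s2 * Av ≤ s2 * ((4 / 3) * Bsq) := mul_le_mul_of_nonneg_left hAhi hs20
  have hP4 : (1 - cosθ) * Bsq ≤ τ * Bsq := mul_le_mul_of_nonneg_right hτ1 hB0
  rw [hδ, hs2] at *
  nlinarith [hDlow, hP1, hP2, hP4]
end
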